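/- Let m ≥ 1, r ≥ 1, r' ∈ ℤ_{≥0}, α_0, a ∈ ℂ, λ_0, λ_1,…,λ_m, α_1,…,α_m ∈ ℂ* with λ_0,…,λ_m pairwise distinct, and let γ(t) = ∑_l c_l t^l ∈ ℂ[t,t^{−1}] be a Laurent polynomial. Let V be an infinite-dimensional irreducible L̄_r-module on which B_r is injective, and let V' be an irreducible L̄_{r'}-module. Then the Virasoro modules M(V,Ω(λ_0,α_0)) ⊗ ⊗_{i=1}^m Ω(λ_i,α_i) and M(V',γ(t)) are not isomorphic: there is no linear bijection between them commuting with the respective operators L_k for all k ∈ ℤ. -/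

import Mathlib

open TensorProduct

/-- Substitution `X_i ↦ X_i - k` (in the variable `i` only) on `ℂ[X_0,…,X_{N-1}]`. -/
noncomputable def shiftVar {N : ℕ} (i : Fin N) (k : ℂ) :
    MvPolynomial (Fin N) ℂ →ₗ[ℂ] MvPolynomial (Fin N) ℂ :=
  (MvPolynomial.aeval fun j =>
    MvPolynomial.X j - if j = i then MvPolynomial.C k else 0).toLinearMap

/-- The operator `L_k` on `⊗_i Ω(λ_i,α_i) = ℂ[X_0,…,X_{N-1}]`. -/
noncomputable def omegaOp {N : ℕ} (lam al : Fin N → ℂ) (k : ℤ) :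
    MvPolynomial (Fin N) ℂ →ₗ[ℂ] MvPolynomial (Fin N) ℂ :=
  ∑ i : Fin N, (lam i ^ k) •
    ((LinearMap.mulLeft ℂ (MvPolynomial.X i - MvPolynomial.C ((k : ℂ) * al i))).comp
      (shiftVar i (k : ℂ)))

/-- The operator `L_k` on `M(V,Ω(λ_0,α_0)) ⊗ ⊗_{i=1}^m Ω(λ_i,α_i) = V ⊗ ℂ[X_0,…,X_m]`. -/
noncomputable def MOp {V : Type*} [AddCommGroup V] [Module ℂ V]
    (B : ℕ → V →ₗ[ℂ] V) (r : ℕ) {m : ℕ} (lam al : Fin (m + 1) → ℂ) (k : ℤ) :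
    V ⊗[ℂ] MvPolynomial (Fin (m + 1)) ℂ →ₗ[ℂ] V ⊗[ℂ] MvPolynomial (Fin (m + 1)) ℂ :=
  TensorProduct.map LinearMap.id (omegaOp lam al k) +
  ∑ j ∈ Finset.range (r + 1),
    (((k : ℂ) ^ (j + 1)) / ((j + 1).factorial : ℂ)) •
      TensorProduct.map (B j) ((lam 0 ^ k) • shiftVar 0 (k : ℂ))

/-- The operator `L_k` on the Virasoro module `M(V',γ(t)) = V' ⊗ ℂ[t,t^{−1}]`
(where `ℂ[t,t^{−1}]` is realised as `ℤ →₀ ℂ`, with `t^n` the finitely supported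
function `single n 1`):
`L_k(v ⊗ t^n) = (a + n) v ⊗ t^{k+n} + ∑_{e=0}^{r'} (k^{e+1}/(e+1)!) B'_e v ⊗ t^{k+n}
  + ∑_l c_l v ⊗ t^{n+l}`. -/
noncomputable def laurOp {V' : Type*} [AddCommGroup V'] [Module ℂ V']
    (B' : ℕ → V' →ₗ[ℂ] V') (r' : ℕ) (a : ℂ) (c : ℤ →₀ ℂ) (k : ℤ) :
    V' ⊗[ℂ] (ℤ →₀ ℂ) →ₗ[ℂ] V' ⊗[ℂ] (ℤ →₀ ℂ) :=
  TensorProduct.map LinearMap.id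
      (Finsupp.lsum ℂ fun n : ℤ => (a + (n : ℂ)) • Finsupp.lsingle (k + n)) +
  (∑ e ∈ Finset.range (r' + 1),
    (((k : ℂ) ^ (e + 1)) / ((e + 1).factorial : ℂ)) •
      TensorProduct.map (B' e) (Finsupp.lsum ℂ fun n : ℤ => Finsupp.lsingle (k + n))) +
  TensorProduct.map LinearMap.id
      (Finsupp.lsum ℂ fun n : ℤ => c.sum fun l cl => cl • Finsupp.lsingle (n + l))

/-! In `M(V,Ω(λ_0,α_0)) ⊗ ⊗ Ω(λ_i,α_i)` the vectors `L_k x`, `k ∈ ℤ`, span a finite-dimensional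
space for every `x`: for `x = v ⊗ f` they lie in `span(v, B_0 v, …, B_r v) ⊗ ℂ[X]_{≤ deg f + 1}`.
In `M(V',γ(t))` this fails for `x = v' ⊗ t^n` with `v' ≠ 0` and `a + n ≠ 0`: up to the
`k`-independent vector `v' ⊗ γ t^n`, `L_k x` is homogeneous of degree `k + n` in `t`, and nonzero
for almost all `k`. An isomorphism intertwining the `L_k` carries the span of the `L_k x` onto
that of the `L_k (φ x)`. -/

namespace MvPolynomial

variable {R σ τ : Type*} [CommSemiring R]

theorem totalDegree_aeval_le_mul {g : σ → MvPolynomial τ R} {d : ℕ}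
    (hg : ∀ j, (g j).totalDegree ≤ d) (f : MvPolynomial σ R) :
    (aeval g f).totalDegree ≤ f.totalDegree * d := by
  conv_lhs => rw [f.as_sum]
  rw [map_sum]
  refine (totalDegree_finsetSum _ _).trans (Finset.sup_le fun s hs => ?_)
  rw [aeval_monomial, algebraMap_eq]
  calc (C (coeff s f) * s.prod fun j e => g j ^ e).totalDegree
      ≤ ∑ j ∈ s.support, (g j ^ s j).totalDegree := by
        refine (totalDegree_mul _ _).trans ?_
        rw [totalDegree_C, zero_add, Finsupp.prod]
        exact totalDegree_finsetProd _ _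
    _ ≤ ∑ j ∈ s.support, s j * d :=
        Finset.sum_le_sum fun j _ => (totalDegree_pow _ _).trans (Nat.mul_le_mul_left _ (hg j))
    _ ≤ f.totalDegree * d := by
        rw [← Finset.sum_mul]
        exact Nat.mul_le_mul_right _ (le_totalDegree hs)

end MvPolynomial

open MvPolynomial in
theorem totalDegree_shiftVar_le {N : ℕ} (i : Fin N) (k : ℂ) (f : MvPolynomial (Fin N) ℂ) :
    (shiftVar i k f).totalDegree ≤ f.totalDegree := by
  refine (totalDegree_aeval_le_mul (fun j => ?_) f).trans_eq (mul_one _)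
  split_ifs
  · exact (totalDegree_sub_C_le _ _).trans_eq (totalDegree_X _)
  · rw [sub_zero, totalDegree_X]

open MvPolynomial in
theorem totalDegree_omegaOp_le {N : ℕ} (lam al : Fin N → ℂ) (k : ℤ)
    (f : MvPolynomial (Fin N) ℂ) :
    (omegaOp lam al k f).totalDegree ≤ f.totalDegree + 1 := by
  rw [omegaOp, LinearMap.sum_apply]
  refine (totalDegree_finsetSum _ _).trans (Finset.sup_le fun i _ => ?_)
  rw [LinearMap.smul_apply, LinearMap.comp_apply, LinearMap.mulLeft_apply]
  refine (totalDegree_smul_le _ _).trans ((totalDegree_mul _ _).trans ?_)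
  have hX : (X i - C ((k : ℂ) * al i) : MvPolynomial (Fin N) ℂ).totalDegree ≤ 1 :=
    (totalDegree_sub_C_le _ _).trans_eq (totalDegree_X _)
  have hf := totalDegree_shiftVar_le i (k : ℂ) f
  omega

section Orbit

variable {R M N : Type*} [Semiring R] [AddCommMonoid M] [Module R M]
  [AddCommMonoid N] [Module R N]

def orbitSpan (L : ℤ → M →ₗ[R] M) (x : M) : Submodule R M :=
  Submodule.span R (Set.range fun k => L k x)

theorem orbitSpan_le_iff {L : ℤ → M →ₗ[R] M} {x : M} {W : Submodule R M} :
    orbitSpan L x ≤ W ↔ ∀ k, L k x ∈ W := by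
  rw [orbitSpan, Submodule.span_le, Set.range_subset_iff]
  rfl

theorem orbitSpan_add_le (L : ℤ → M →ₗ[R] M) (x y : M) :
    orbitSpan L (x + y) ≤ orbitSpan L x ⊔ orbitSpan L y :=
  orbitSpan_le_iff.mpr fun k => (L k).map_add x y ▸ Submodule.add_mem_sup
    (Submodule.subset_span ⟨k, rfl⟩) (Submodule.subset_span ⟨k, rfl⟩)

theorem orbitSpan_apply_of_intertwines {F : Type*} [FunLike F M N] [LinearMapClass F R M N]
    {L : ℤ → M →ₗ[R] M} {L' : ℤ → N →ₗ[R] N} (φ : F) (hφ : ∀ k x, φ (L k x) = L' k (φ x)) (x : M) :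
    orbitSpan L' (φ x) = (orbitSpan L x).map (φ : M →ₗ[R] N) := by
  rw [orbitSpan, orbitSpan, Submodule.map_span, ← Set.range_comp]
  simp only [Function.comp_def, LinearMap.coe_coe, hφ]

end Orbit

theorem Finsupp.exists_le_supported_of_fg {R M ι : Type*} [Semiring R] [AddCommMonoid M]
    [Module R M] {W : Submodule R (ι →₀ M)} (hW : W.FG) :
    ∃ T : Finset ι, W ≤ Finsupp.supported M R (T : Set ι) := by
  classical
  obtain ⟨S, rfl⟩ := hW
  refine ⟨S.sup Finsupp.support, Submodule.span_le.mpr fun g hg => ?_⟩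
  rw [SetLike.mem_coe, Finsupp.mem_supported]
  exact Finset.coe_subset.mpr (Finset.le_sup (f := Finsupp.support) hg)

theorem TensorProduct.tmul_mem_range_map_subtype {R M P : Type*} [CommSemiring R]
    [AddCommMonoid M] [Module R M] [AddCommMonoid P] [Module R P]
    {U : Submodule R M} {Q : Submodule R P} {v : M} {f : P} (hv : v ∈ U) (hf : f ∈ Q) :
    v ⊗ₜ[R] f ∈ LinearMap.range (map U.subtype Q.subtype) :=
  ⟨⟨v, hv⟩ ⊗ₜ ⟨f, hf⟩, rfl⟩

section MOp

variable {V : Type*} [AddCommGroup V] [Module ℂ V]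
  (B : ℕ → V →ₗ[ℂ] V) (r : ℕ) {m : ℕ} (lam al : Fin (m + 1) → ℂ)

theorem MOp_tmul_mem (v : V) (f : MvPolynomial (Fin (m + 1)) ℂ) (k : ℤ) :
    MOp B r lam al k (v ⊗ₜ f) ∈ LinearMap.range (map
      (Submodule.span ℂ (insert v (Set.range fun j : Fin (r + 1) => B j v))).subtype
      (MvPolynomial.restrictTotalDegree (Fin (m + 1)) ℂ (f.totalDegree + 1)).subtype) := by
  have hdeg : ∀ g : MvPolynomial (Fin (m + 1)) ℂ, g.totalDegree ≤ f.totalDegree + 1 →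
      g ∈ MvPolynomial.restrictTotalDegree (Fin (m + 1)) ℂ (f.totalDegree + 1) :=
    fun g hg => (MvPolynomial.mem_restrictTotalDegree _ _ _).mpr hg
  rw [MOp, LinearMap.add_apply, LinearMap.sum_apply]
  refine Submodule.add_mem _ ?_ (Submodule.sum_mem _ fun j hj => ?_)
  · rw [map_tmul]
    exact tmul_mem_range_map_subtype (Submodule.subset_span (Set.mem_insert _ _))
      (hdeg _ (totalDegree_omegaOp_le lam al k f))
  · rw [LinearMap.smul_apply, map_tmul, LinearMap.smul_apply, tmul_smul]
    refine Submodule.smul_mem _ _ (Submodule.smul_mem _ _ (tmul_mem_range_map_subtype ?_ ?_))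
    · exact Submodule.subset_span
        (Set.mem_insert_of_mem _ ⟨⟨j, Finset.mem_range.mp hj⟩, rfl⟩)
    · exact hdeg _ ((totalDegree_shiftVar_le _ _ _).trans (Nat.le_succ _))

theorem fg_orbitSpan_MOp (x : V ⊗[ℂ] MvPolynomial (Fin (m + 1)) ℂ) :
    (orbitSpan (MOp B r lam al) x).FG := by
  induction x using TensorProduct.induction_on with
  | zero => simp [orbitSpan, Submodule.fg_bot]
  | tmul v f =>
    have : Module.Finite ℂ
        (Submodule.span ℂ (insert v (Set.range fun j : Fin (r + 1) => B j v))) :=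
      Module.Finite.span_of_finite ℂ ((Set.finite_range _).insert v)
    exact Submodule.FG.of_le (Module.Finite.iff_fg.mp (Module.Finite.range _))
      (orbitSpan_le_iff.mpr (MOp_tmul_mem B r lam al v f))
  | add x y hx hy => exact (hx.sup hy).of_le (orbitSpan_add_le _ x y)

end MOp

section laurOp

variable {V' : Type*} [AddCommGroup V'] [Module ℂ V']
  (B' : ℕ → V' →ₗ[ℂ] V') (r' : ℕ) (a : ℂ) (c : ℤ →₀ ℂ)

/-- The coefficient of `t^{k+n}` in `L_k (v' ⊗ t^n)`, apart from the contribution of `γ`. -/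
noncomputable def laurOpCoeff (v' : V') (n k : ℤ) : V' :=
  (a + (n : ℂ)) • v' +
    ∑ e ∈ Finset.range (r' + 1), (((k : ℂ) ^ (e + 1)) / ((e + 1).factorial : ℂ)) • B' e v'

theorem laurOp_tmul_single (v' : V') (n k : ℤ) :
    laurOp B' r' a c k (v' ⊗ₜ[ℂ] Finsupp.single n 1) =
      laurOpCoeff B' r' a v' n k ⊗ₜ[ℂ] Finsupp.single (k + n) 1 +
        v' ⊗ₜ[ℂ] c.sum fun l cl => Finsupp.single (n + l) cl := by
  rw [laurOp, LinearMap.add_apply, LinearMap.add_apply, LinearMap.sum_apply, map_tmul,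
    map_tmul, Finsupp.lsum_single, Finsupp.lsum_single, laurOpCoeff, add_tmul, sum_tmul]
  congr 2
  · rw [LinearMap.smul_apply, Finsupp.lsingle_apply, tmul_smul, smul_tmul', LinearMap.id_apply]
  · refine Finset.sum_congr rfl fun e _ => ?_
    rw [LinearMap.smul_apply, map_tmul, Finsupp.lsum_single, Finsupp.lsingle_apply, smul_tmul']
  · simp [Finsupp.smul_single]

/-- Pairing with a functional `ψ` with `ψ v' ≠ 0` turns `k ↦ laurOpCoeff k` into a polynomial
in `k` with constant term `(a + n) ψ v' ≠ 0`. -/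
theorem finite_setOf_laurOpCoeff_eq_zero {v' : V'} (hv' : v' ≠ 0) {n : ℤ}
    (hn : a + (n : ℂ) ≠ 0) : {k : ℤ | laurOpCoeff B' r' a v' n k = 0}.Finite := by
  obtain ⟨ψ, hψ⟩ : ∃ ψ : Module.Dual ℂ V', ψ v' ≠ 0 := by
    by_contra! h
    exact hv' ((Module.forall_dual_apply_eq_zero_iff ℂ v').mp h)
  set q : Polynomial ℂ := Polynomial.C ((a + (n : ℂ)) * ψ v') +
    ∑ e ∈ Finset.range (r' + 1),
      Polynomial.C (ψ (B' e v') / ((e + 1).factorial : ℂ)) * Polynomial.X ^ (e + 1)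
  have hq0 : q ≠ 0 := by
    intro h
    have hc := congrArg (Polynomial.coeff · 0) h
    simp [q, Polynomial.coeff_X_pow, Polynomial.coeff_C] at hc
    exact hψ (hc.resolve_left hn)
  have hψq : ∀ k : ℤ, ψ (laurOpCoeff B' r' a v' n k) = q.eval (k : ℂ) := by
    intro k
    simp only [laurOpCoeff, q, map_add, map_smul, map_sum, smul_eq_mul, Polynomial.eval_add,
      Polynomial.eval_C, Polynomial.eval_finsetSum, Polynomial.eval_mul, Polynomial.eval_pow,
      Polynomial.eval_X]
    congr 1
    exact Finset.sum_congr rfl fun e _ => by ring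
  refine ((Polynomial.finite_setOfPred_isRoot hq0).preimage Int.cast_injective.injOn).subset
    fun k hk => ?_
  simp only [Set.mem_ofPred_eq, Set.mem_preimage, Polynomial.IsRoot.def] at hk ⊢
  rw [← hψq, hk, map_zero]

theorem not_fg_orbitSpan_laurOp {v' : V'} (hv' : v' ≠ 0) {n : ℤ} (hn : a + (n : ℂ) ≠ 0) :
    ¬ (orbitSpan (laurOp B' r' a c) (v' ⊗ₜ[ℂ] Finsupp.single n 1)).FG := by
  intro hfg
  set γn : ℤ →₀ ℂ := c.sum fun l cl => Finsupp.single (n + l) cl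
  set e := TensorProduct.finsuppScalarRight ℂ ℂ V' ℤ
  set W := (orbitSpan (laurOp B' r' a c) (v' ⊗ₜ[ℂ] Finsupp.single n 1) ⊔
    Submodule.span ℂ {v' ⊗ₜ[ℂ] γn}).map (e : V' ⊗[ℂ] (ℤ →₀ ℂ) →ₗ[ℂ] ℤ →₀ V')
  obtain ⟨T, hT⟩ := Finsupp.exists_le_supported_of_fg
    ((hfg.sup (Submodule.fg_span_singleton _)).map _ : W.FG)
  have hbad : ({k | laurOpCoeff B' r' a v' n k = 0} ∪ (· + n) ⁻¹' (T : Set ℤ)).Finite :=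
    (finite_setOf_laurOpCoeff_eq_zero B' r' a hv' hn).union
      (T.finite_toSet.preimage (add_left_injective n).injOn)
  obtain ⟨k, hk⟩ := hbad.infinite_compl.nonempty
  simp only [Set.mem_compl_iff, Set.mem_union, Set.mem_ofPred_eq, Set.mem_preimage,
    Finset.mem_coe, not_or] at hk
  have hmem : Finsupp.single (k + n) (laurOpCoeff B' r' a v' n k) ∈ W := by
    rw [Submodule.mem_map_equiv, finsuppScalarRight_symm_apply_single, ← add_sub_cancel_right
        (laurOpCoeff B' r' a v' n k ⊗ₜ[ℂ] Finsupp.single (k + n) (1 : ℂ)) (v' ⊗ₜ[ℂ] γn),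
      ← laurOp_tmul_single]
    exact Submodule.sub_mem _
      (Submodule.mem_sup_left (Submodule.subset_span ⟨k, rfl⟩))
      (Submodule.mem_sup_right (Submodule.mem_span_singleton_self _))
  have hsupp := (Finsupp.mem_supported ℂ _).mp (hT hmem)
  exact hk.2 (hsupp (by simp [hk.1]))

end laurOp

theorem statement14_general {V V' : Type*} [AddCommGroup V] [Module ℂ V]
    [AddCommGroup V'] [Module ℂ V']
    (m r r' : ℕ)
    (lam al : Fin (m + 1) → ℂ)
    (a : ℂ) (c : ℤ →₀ ℂ)
    (B : ℕ → V →ₗ[ℂ] V)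
    (B' : ℕ → V' →ₗ[ℂ] V')
    (hV'ne : ∃ v : V', v ≠ 0) :
    ¬ ∃ φ : (V ⊗[ℂ] MvPolynomial (Fin (m + 1)) ℂ) ≃ₗ[ℂ] (V' ⊗[ℂ] (ℤ →₀ ℂ)),
        ∀ (k : ℤ) (x : V ⊗[ℂ] MvPolynomial (Fin (m + 1)) ℂ),
          φ (MOp B r lam al k x) = laurOp B' r' a c k (φ x) := by
  rintro ⟨φ, hφ⟩
  obtain ⟨v', hv'⟩ := hV'ne
  obtain ⟨n, hn⟩ : ∃ n : ℤ, a + (n : ℂ) ≠ 0 := by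
    rcases eq_or_ne a 0 with h | h
    · exact ⟨1, by simp [h]⟩
    · exact ⟨0, by simpa using h⟩
  have horbit := orbitSpan_apply_of_intertwines φ hφ (φ.symm (v' ⊗ₜ[ℂ] Finsupp.single n 1))
  rw [φ.apply_symm_apply] at horbit
  exact not_fg_orbitSpan_laurOp B' r' a c hv' hn
    (horbit ▸ (fg_orbitSpan_MOp B r lam al _).map _)

/-- **Proposition 5.3 (first part).** Let `m ≥ 1`, `r ≥ 1`, `r' ∈ ℤ_{≥0}`,
`α_0, a ∈ ℂ`, `λ_0,…,λ_m, α_1,…,α_m ∈ ℂ*` with `λ_0,…,λ_m` pairwise distinct, and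
`γ(t) ∈ ℂ[t,t^{−1}]`. Let `V` be an infinite-dimensional irreducible `L̄_r`-module
on which `B_r` is injective, and `V'` an irreducible `L̄_{r'}`-module. Then
`M(V,Ω(λ_0,α_0)) ⊗ ⊗_{i=1}^m Ω(λ_i,α_i) ≇ M(V',γ(t))`. -/
theorem statement14 {V V' : Type*} [AddCommGroup V] [Module ℂ V]
    [AddCommGroup V'] [Module ℂ V']
    (m r r' : ℕ) (hm : 1 ≤ m) (hr : 1 ≤ r)
    (lam al : Fin (m + 1) → ℂ)
    (hlam : ∀ i, lam i ≠ 0) (hlaminj : Function.Injective lam)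
    (hal : ∀ i, i ≠ 0 → al i ≠ 0)
    (a : ℂ) (c : ℤ →₀ ℂ)
    (B : ℕ → V →ₗ[ℂ] V)
    (hBtop : ∀ i, r < i → B i = 0)
    (hBrel : ∀ i j, i ≤ r → j ≤ r →
      B i ∘ₗ B j - B j ∘ₗ B i = (((j : ℂ) - (i : ℂ)) • B (i + j) : V →ₗ[ℂ] V))
    (hVne : ∃ v : V, v ≠ 0)
    (hVirr : ∀ U : Submodule ℂ V, (∀ i, i ≤ r → ∀ w ∈ U, B i w ∈ U) → U = ⊥ ∨ U = ⊤)
    (hVinf : ¬ Module.Finite ℂ V)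
    (hBrinj : Function.Injective (B r))
    (B' : ℕ → V' →ₗ[ℂ] V')
    (hB'top : ∀ i, r' < i → B' i = 0)
    (hB'rel : ∀ i j, i ≤ r' → j ≤ r' →
      B' i ∘ₗ B' j - B' j ∘ₗ B' i = (((j : ℂ) - (i : ℂ)) • B' (i + j) : V' →ₗ[ℂ] V'))
    (hV'ne : ∃ v : V', v ≠ 0)
    (hV'irr : ∀ U : Submodule ℂ V',
      (∀ i, i ≤ r' → ∀ w ∈ U, B' i w ∈ U) → U = ⊥ ∨ U = ⊤) :
    ¬ ∃ φ : (V ⊗[ℂ] MvPolynomial (Fin (m + 1)) ℂ) ≃ₗ[ℂ] (V' ⊗[ℂ] (ℤ →₀ ℂ)),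
        ∀ (k : ℤ) (x : V ⊗[ℂ] MvPolynomial (Fin (m + 1)) ℂ),
          φ (MOp B r lam al k x) = laurOp B' r' a c k (φ x) :=
  statement14_general m r r' lam al a c B B' hV'ne
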